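/- Let σ and G be symmetric positive semidefinite n×n real matrices. Then the matrix P = I + σG is invertible. -/

import Mathlib

open Matrix
open scoped ComplexOrder

/-!
Write `σ = S * S` with `S` the positive semidefinite square root of `σ`. Since
`det (1 + X * Y) = det (1 + Y * X)`, the determinant of `1 + σ * G = 1 + S * (S * G)` equals that of
`1 + S * G * S`, which is positive definite because `S * G * S = Sᴴ * G * S` is positive semidefinite.
-/

namespace Matrix.PosSemidef

variable {n 𝕜 : Type*} [Fintype n] [DecidableEq n] [RCLike 𝕜]

lemma exists_posSemidef_mul_self_eq {A : Matrix n n 𝕜} (hA : A.PosSemidef) :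
    ∃ S : Matrix n n 𝕜, S.PosSemidef ∧ S * S = A := by
  open scoped MatrixOrder in
  exact ⟨CFC.sqrt A, nonneg_iff_posSemidef.mp (CFC.sqrt_nonneg A),
    CFC.sqrt_mul_sqrt_self A hA.nonneg⟩

lemma posDef_one_add_mul_mul_self {S B : Matrix n n 𝕜} (hS : S.IsHermitian)
    (hB : B.PosSemidef) : (1 + S * B * S).PosDef := by
  have hSBS : (S * B * S).PosSemidef := by
    simpa only [hS.eq] using hB.conjTranspose_mul_mul_same S
  exact PosDef.one.add_posSemidef hSBS

lemma isUnit_one_add_mul {A B : Matrix n n 𝕜} (hA : A.PosSemidef) (hB : B.PosSemidef) :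
    IsUnit (1 + A * B) := by
  obtain ⟨S, hS, rfl⟩ := hA.exists_posSemidef_mul_self_eq
  rw [isUnit_iff_isUnit_det, Matrix.mul_assoc, det_one_add_mul_comm,
    ← isUnit_iff_isUnit_det]
  exact (posDef_one_add_mul_mul_self hS.isHermitian hB).isUnit

end Matrix.PosSemidef

/-- For symmetric positive semidefinite `σ` and `G`, the matrix
`P = I + σG` is invertible. -/
theorem one_add_psd_mul_psd_isUnit
    (n : ℕ) (σ G : Matrix (Fin n) (Fin n) ℝ)
    (hσ : σ.PosSemidef) (hG : G.PosSemidef) :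
    IsUnit (1 + σ * G) :=
  hσ.isUnit_one_add_mul hG
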